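/- arXiv:2304.03597 — 2 statements merged into one kernel-verified Lean document; each statement's English description precedes it below -/
import Mathlib

section
/- There exists a constant C (depending on k, Λ, α, and lower bounds on the evanescent decay rates) such that for all h > 0 and all y, z with y₂, z₂ ≥ 0, the evanescent remainder sum satisfies |Σ_{n∈U_α} (1/√(α_n²-k²)) e^{-√(α_n²-k²)(2h + y₂ + z₂)}| ≤ C·(e^{-β_Δ(2h + y₂ + z₂)}/β_Δ + 1/(k(2h + y₂ + z₂))), where β_Δ = min{√(α_n² - k²) : n ∈ U_α}. -/
/-!
Since `exp (-x) ≤ 1 / x`, each term is at most `1 / ((α_n² - k²) a)` with `a = 2h + y₂ + z₂`,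
and `∑ 1 / (α_n² - k²)` converges because `α_n² - k² ≥ (2πn/Λ)² / 4` for large `|n|`.
Hence the whole sum is `O(1 / a)`, which the term `1 / (k a)` of the bound absorbs.
-/

open Real Filter

lemma Real.exp_neg_le_inv {x : ℝ} (hx : 0 < x) : exp (-x) ≤ x⁻¹ := by
  rw [exp_neg]
  exact inv_anti₀ hx (by linarith [add_one_le_exp x])

lemma one_div_sqrt_mul_exp_neg_le {q a : ℝ} (hq : 0 < q) (ha : 0 < a) :
    1 / √q * exp (-√q * a) ≤ q⁻¹ / a := by
  have hs : 0 < √q := sqrt_pos.2 hq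
  calc 1 / √q * exp (-√q * a) ≤ 1 / √q * (√q * a)⁻¹ := by
        rw [neg_mul]; gcongr; exact exp_neg_le_inv (by positivity)
    _ = q⁻¹ / a := by
        field_simp
        rw [sq_sqrt hq.le]

lemma abs_tsum_one_div_sqrt_mul_exp_neg_le {ι : Type*} {q : ι → ℝ} (hq : ∀ i, 0 < q i)
    (hs : Summable fun i ↦ (q i)⁻¹) {a : ℝ} (ha : 0 < a) :
    |∑' i, 1 / √(q i) * exp (-√(q i) * a)| ≤ (∑' i, (q i)⁻¹) / a := by
  have hle i := one_div_sqrt_mul_exp_neg_le (hq i) ha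
  have hnonneg i : 0 ≤ 1 / √(q i) * exp (-√(q i) * a) := by positivity
  rw [abs_of_nonneg (tsum_nonneg hnonneg), ← tsum_div_const]
  exact Summable.tsum_le_tsum hle (.of_nonneg_of_le hnonneg hle (hs.div_const a)) (hs.div_const a)

lemma inv_add_sq_sub_sq_le {a k x : ℝ} (hk : 0 ≤ k) (hx₀ : x ≠ 0) (hx : 2 * (|a| + k) ≤ |x|) :
    |((a + x) ^ 2 - k ^ 2)⁻¹| ≤ 4 * (x ^ 2)⁻¹ := by
  have hax : |x| / 2 + k ≤ |a + x| := by
    have : |x| ≤ |a + x| + |a| := by simpa using abs_add_le (a + x) (-a)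
    linarith
  have hlow : x ^ 2 / 4 ≤ (a + x) ^ 2 - k ^ 2 := by
    rw [← sq_abs (a + x), ← sq_abs x]
    nlinarith [abs_nonneg x]
  have hpos : 0 < x ^ 2 / 4 := by positivity
  rw [abs_of_nonneg (inv_nonneg.2 (hpos.le.trans hlow))]
  calc ((a + x) ^ 2 - k ^ 2)⁻¹ ≤ (x ^ 2 / 4)⁻¹ := inv_anti₀ hpos hlow
    _ = 4 * (x ^ 2)⁻¹ := by field_simp

lemma summable_inv_add_mul_sq_sub_sq (a k : ℝ) (hk : 0 ≤ k) {c : ℝ} (hc : c ≠ 0) :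
    Summable fun n : ℤ ↦ ((a + c * n) ^ 2 - k ^ 2)⁻¹ := by
  have hg : Summable fun n : ℤ ↦ 4 * ((c * n) ^ 2)⁻¹ := by
    have := (Real.summable_one_div_int_pow.2 one_lt_two).mul_left (4 * (c ^ 2)⁻¹)
    refine this.congr fun n ↦ ?_
    rw [mul_pow, mul_inv]; ring
  refine hg.of_norm_bounded_eventually ?_
  have hlarge := (tendsto_norm_cocompact_atTop.comp
    (Int.tendsto_zmultiplesHom_cofinite hc)).eventually_ge_atTop (2 * (|a| + k))
  filter_upwards [hlarge, eventually_cofinite_ne 0] with n hn hn₀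
  simp only [Function.comp_apply, zmultiplesHom_apply, zsmul_eq_mul, Real.norm_eq_abs,
    mul_comm (n : ℝ)] at hn
  exact inv_add_sq_sub_sq_le hk (by simp [hc, hn₀]) hn

theorem stmt7_general (k Λ α : ℝ) (hk : 0 < k) (hΛ : 0 < Λ)
    (αn : ℤ → ℝ) (hαn : ∀ n, αn n = α + 2 * Real.pi * n / Λ)
    (βΔ : ℝ) (hβΔpos : 0 < βΔ) :
    ∃ C : ℝ, 0 < C ∧ ∀ h : ℝ, 0 < h → ∀ y₂ z₂ : ℝ, 0 ≤ y₂ → 0 ≤ z₂ →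
      |∑' n : {n : ℤ // k < |αn n|},
          (1 / Real.sqrt ((αn n)^2 - k^2)) *
            Real.exp (-Real.sqrt ((αn n)^2 - k^2) * (2*h + y₂ + z₂))|
        ≤ C * (Real.exp (-βΔ * (2*h + y₂ + z₂)) / βΔ + 1 / (k * (2*h + y₂ + z₂))) := by
  have hsum : Summable fun n : ℤ ↦ ((αn n) ^ 2 - k ^ 2)⁻¹ := by
    simpa only [hαn, mul_div_right_comm] using
      summable_inv_add_mul_sq_sub_sq α k hk.le (c := 2 * π / Λ) (by positivity)
  have hpos (n : {n : ℤ // k < |αn n|}) : 0 < (αn n) ^ 2 - k ^ 2 :=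
    sub_pos.2 (sq_lt_sq.2 (by rw [abs_of_pos hk]; exact n.2))
  set S := ∑' n : {n : ℤ // k < |αn n|}, ((αn n) ^ 2 - k ^ 2)⁻¹
  have hS : 0 ≤ S := tsum_nonneg fun n ↦ (inv_pos.2 (hpos n)).le
  refine ⟨S * k + 1, by positivity, fun h hh y₂ z₂ hy hz ↦ ?_⟩
  set a := 2 * h + y₂ + z₂
  have ha : 0 < a := by positivity
  calc _ ≤ S / a := abs_tsum_one_div_sqrt_mul_exp_neg_le hpos (hsum.subtype _) ha
    _ = S * k * (1 / (k * a)) := by field_simp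
    _ ≤ (S * k + 1) * (exp (-βΔ * a) / βΔ + 1 / (k * a)) := by
        gcongr
        · linarith
        · exact le_add_of_nonneg_left (by positivity)

theorem stmt7 (k Λ α : ℝ) (hk : 0 < k) (hΛ : 0 < Λ)
    (αn : ℤ → ℝ) (hαn : ∀ n, αn n = α + 2 * Real.pi * n / Λ)
    (hwood : ∀ n : ℤ, |αn n| ≠ k)
    (βΔ : ℝ) (hβΔ : βΔ = ⨅ n : {n : ℤ // k < |αn n|}, Real.sqrt ((αn n)^2 - k^2))
    (hβΔpos : 0 < βΔ) :
    ∃ C : ℝ, 0 < C ∧ ∀ h : ℝ, 0 < h → ∀ y₂ z₂ : ℝ, 0 ≤ y₂ → 0 ≤ z₂ →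
      |∑' n : {n : ℤ // k < |αn n|},
          (1 / Real.sqrt ((αn n)^2 - k^2)) *
            Real.exp (-Real.sqrt ((αn n)^2 - k^2) * (2*h + y₂ + z₂))|
        ≤ C * (Real.exp (-βΔ * (2*h + y₂ + z₂)) / βΔ + 1 / (k * (2*h + y₂ + z₂))) :=
  stmt7_general k Λ α hk hΛ αn hαn βΔ hβΔpos
end

section
/- For the upper measurement surface Γ_h, the analogous Helmholtz–Kirchhoff identity holds with a sign change: ∫_{Γ_h} [conj(∂_x₂ G(x,y)) G(x,z) - ∂_x₂ G(x,z) conj(G(x,y))] ds(x) = -F^U_α(y,z) for y₂, z₂ < h, where F^U_α(y,z) = (i/(2Λ)) Σ_{n∈B_α} (1/β_n) e^{iα_n(y₁-z₁) + iβ_n(y₂-z₂)}. -/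
open Complex ComplexConjugate
open scoped Real

/-! On `Γ_h` the trace of `G(·, w)` is a finite sum of Bloch waves `∑ cₙ(w) e^{iαₙx₁}`, and
`∂_{x₂}` multiplies the `n`-th coefficient by `iβₙ`. The Bloch waves are orthogonal over one
period, so the flux integral collapses to `Λ ∑ₙ (conj(iβₙ) - iβₙ) conj(cₙ(y)) cₙ(z)`. For an
evanescent mode `iβₙ` is real and the term vanishes; for a propagating one
`conj(iβₙ) - iβₙ = -2iβₙ`, and these terms add up to `-F^U_α(y, z)`. -/

lemma integral_exp_two_pi_int_mul_I (Λ c : ℝ) (hΛ : Λ ≠ 0) (k : ℤ) :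
    ∫ x in c..c + Λ, exp (I * (2 * π * k / Λ : ℝ) * x) = if k = 0 then (Λ : ℂ) else 0 := by
  split_ifs with hk
  · simp [hk]
  have hω : I * ((2 * π * k / Λ : ℝ) : ℂ) ≠ 0 :=
    mul_ne_zero I_ne_zero (ofReal_ne_zero.mpr (by positivity))
  have hfull_turn : exp (I * (2 * π * k / Λ : ℝ) * Λ) = 1 := by
    convert exp_int_mul_two_pi_mul_I k using 2
    push_cast
    field_simp [ofReal_ne_zero.mpr hΛ]
  rw [integral_exp_mul_complex hω, ofReal_add, mul_add, Complex.exp_add, hfull_turn, mul_one,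
    sub_self, zero_div]

section BlochWaves

variable {Λ α : ℝ} {αn : ℤ → ℝ}

lemma integral_conj_exp_mul_exp (hΛ : Λ ≠ 0) (hαn : ∀ n, αn n = α + 2 * π * n / Λ)
    (c : ℝ) (m n : ℤ) :
    ∫ x in c..c + Λ, conj (exp (I * αn m * x)) * exp (I * αn n * x)
      = if m = n then (Λ : ℂ) else 0 := by
  have hphase : ∀ x : ℝ, conj (exp (I * αn m * x)) * exp (I * αn n * x)
      = exp (I * (2 * π * (n - m : ℤ) / Λ : ℝ) * x) := by
    intro x
    rw [← exp_conj, ← exp_add, map_mul, map_mul, conj_I, conj_ofReal, conj_ofReal, hαn, hαn]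
    push_cast
    ring_nf
  simp_rw [hphase, integral_exp_two_pi_int_mul_I Λ c hΛ, sub_eq_zero, eq_comm]

lemma integral_conj_sum_mul_sum (hΛ : Λ ≠ 0) (hαn : ∀ n, αn n = α + 2 * π * n / Λ)
    (c : ℝ) (S : Finset ℤ) (a b : ℤ → ℂ) :
    ∫ x in c..c + Λ, conj (∑ n ∈ S, a n * exp (I * αn n * x)) * ∑ n ∈ S, b n * exp (I * αn n * x)
      = Λ * ∑ n ∈ S, conj (a n) * b n := by
  have hterm : ∀ m n : ℤ, ∀ x : ℝ, conj (a m * exp (I * αn m * x)) * (b n * exp (I * αn n * x))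
      = conj (a m) * b n * (conj (exp (I * αn m * x)) * exp (I * αn n * x)) := by
    intro m n x
    rw [map_mul]
    ring
  simp_rw [map_sum, Finset.sum_mul_sum, hterm]
  rw [intervalIntegral.integral_finsetSum fun m _ =>
    (by fun_prop : Continuous _).intervalIntegrable _ _, Finset.mul_sum]
  refine Finset.sum_congr rfl fun m hm => ?_
  rw [intervalIntegral.integral_finsetSum fun n _ =>
    (by fun_prop : Continuous _).intervalIntegrable _ _]
  simp_rw [intervalIntegral.integral_const_mul, integral_conj_exp_mul_exp hΛ hαn]
  simp [hm]
  ring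

end BlochWaves

/-- The coefficient of `exp (I * a * x₁)` in the trace of `G(·, w)` on `x₂ = h`, for a mode with
propagation constant `b`. -/
noncomputable def greenCoeff (Λ h a : ℝ) (b : ℂ) (w : ℝ × ℝ) : ℂ :=
  I / (2 * Λ) * (1 / b * exp (-(I * a * w.1) + I * b * (h - w.2)))

lemma greenCoeff_mul_exp (Λ h a x : ℝ) (b : ℂ) (w : ℝ × ℝ) :
    greenCoeff Λ h a b w * exp (I * a * x)
      = I / (2 * Λ) * (1 / b * exp (I * a * (x - w.1) + I * b * (h - w.2))) := by
  rw [greenCoeff, mul_assoc, mul_assoc, ← Complex.exp_add]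
  ring_nf

lemma greenCoeff_flux_of_real (Λ h a r : ℝ) (y z : ℝ × ℝ) :
    Λ * (conj (I * r * greenCoeff Λ h a r y) * greenCoeff Λ h a r z
        - conj (greenCoeff Λ h a r y) * (I * r * greenCoeff Λ h a r z))
      = -(I / (2 * Λ) * (1 / r * exp (I * a * (y.1 - z.1) + I * r * (y.2 - z.2)))) := by
  have hphase : conj (exp (-(I * a * y.1) + I * r * (h - y.2)))
      * exp (-(I * a * z.1) + I * r * (h - z.2))
      = exp (I * a * (y.1 - z.1) + I * r * (y.2 - z.2)) := by
    rw [← exp_conj, ← Complex.exp_add]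
    simp only [map_add, map_neg, map_mul, map_sub, conj_I, conj_ofReal]
    ring_nf
  simp only [greenCoeff, map_mul, map_div₀, map_one, conj_I, conj_ofReal, map_ofNat]
  rw [← hphase]
  rcases eq_or_ne (r : ℂ) 0 with hr | hr
  · simp [hr]
  rcases eq_or_ne (Λ : ℂ) 0 with hΛ | hΛ
  · simp [hΛ]
  field_simp
  ring_nf
  rw [I_sq]
  ring

theorem stmt13_general (k Λ α h : ℝ) (hΛ : 0 < Λ)
    (αn : ℤ → ℝ) (hαn : ∀ n, αn n = α + 2 * Real.pi * n / Λ)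
    (B S : Finset ℤ) (hBS : B ⊆ S)
    (β : ℤ → ℂ)
    (hβprop : ∀ n ∈ B, β n = ((Real.sqrt (k^2 - (αn n)^2) : ℝ) : ℂ))
    (hβev : ∀ n ∈ S, n ∉ B → β n = Complex.I * ((Real.sqrt ((αn n)^2 - k^2) : ℝ) : ℂ))
    -- the truncated spectral Green's function restricted to x₂ = h, and its x₂-derivative
    (G dG : ℝ → ℝ × ℝ → ℂ)
    (hG : ∀ (x₁ : ℝ) (y : ℝ × ℝ), G x₁ y =
      (Complex.I / (2 * Λ)) * ∑ n ∈ S, (1 / β n) *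
        Complex.exp (Complex.I * (αn n) * (x₁ - y.1) + Complex.I * β n * (h - y.2)))
    (hdG : ∀ (x₁ : ℝ) (y : ℝ × ℝ), dG x₁ y =
      (Complex.I / (2 * Λ)) * ∑ n ∈ S, (1 / β n) * (Complex.I * β n) *
        Complex.exp (Complex.I * (αn n) * (x₁ - y.1) + Complex.I * β n * (h - y.2)))
    (FU : ℝ × ℝ → ℝ × ℝ → ℂ)
    (hFU : ∀ y z : ℝ × ℝ, FU y z =
      (Complex.I / (2 * Λ)) * ∑ n ∈ B, (1 / β n) *
        Complex.exp (Complex.I * (αn n) * (y.1 - z.1) + Complex.I * β n * (y.2 - z.2))) :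
    ∀ y z : ℝ × ℝ, y.2 < h → z.2 < h →
      (∫ x₁ in (-(Λ/2))..(Λ/2),
        ((starRingEnd ℂ) (dG x₁ y) * G x₁ z - dG x₁ z * (starRingEnd ℂ) (G x₁ y)))
        = -FU y z := by
  intro y z _ _
  set g : ℤ → ℝ × ℝ → ℂ := fun n => greenCoeff Λ h (αn n) (β n)
  have hG_trace : ∀ x w, G x w = ∑ n ∈ S, g n w * exp (I * αn n * x) := by
    intro x w
    rw [hG, Finset.mul_sum]
    exact Finset.sum_congr rfl fun n _ => (greenCoeff_mul_exp ..).symm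
  have hdG_trace : ∀ x w, dG x w = ∑ n ∈ S, (I * β n * g n w) * exp (I * αn n * x) := by
    intro x w
    rw [hdG, Finset.mul_sum]
    refine Finset.sum_congr rfl fun n _ => ?_
    rw [mul_assoc (I * β n), greenCoeff_mul_exp]
    ring
  have hevanescent : ∀ n ∈ S, n ∉ B → conj (I * β n) = I * β n := by
    intro n hnS hnB
    rw [hβev n hnS hnB, ← mul_assoc, I_mul_I, neg_one_mul, ← ofReal_neg, conj_ofReal]
  calc _ = ∫ x in -(Λ / 2)..-(Λ / 2) + Λ,
          conj (dG x y) * G x z - conj (G x y) * dG x z := by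
        rw [neg_add_eq_sub, sub_half]
        simp_rw [mul_comm (dG _ z)]
    _ = Λ * ∑ n ∈ S, (conj (I * β n * g n y) * g n z - conj (g n y) * (I * β n * g n z)) := by
        simp_rw [hG_trace, hdG_trace]
        rw [intervalIntegral.integral_sub ((by fun_prop : Continuous _).intervalIntegrable _ _)
          ((by fun_prop : Continuous _).intervalIntegrable _ _),
          integral_conj_sum_mul_sum hΛ.ne' hαn, integral_conj_sum_mul_sum hΛ.ne' hαn,
          ← mul_sub, ← Finset.sum_sub_distrib]
    _ = ∑ n ∈ B, Λ * (conj (I * β n * g n y) * g n z - conj (g n y) * (I * β n * g n z)) := by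
        rw [Finset.mul_sum]
        refine (Finset.sum_subset hBS fun n hnS hnB => ?_).symm
        rw [map_mul, hevanescent n hnS hnB]
        ring
    _ = -FU y z := by
        rw [hFU, Finset.mul_sum, ← Finset.sum_neg_distrib]
        refine Finset.sum_congr rfl fun n hnB => ?_
        simp only [g, hβprop n hnB]
        exact greenCoeff_flux_of_real ..

theorem stmt13 (k Λ α h : ℝ) (hk : 0 < k) (hΛ : 0 < Λ) (hh : 0 < h)
    (αn : ℤ → ℝ) (hαn : ∀ n, αn n = α + 2 * Real.pi * n / Λ)
    (hwood : ∀ n : ℤ, |αn n| ≠ k)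
    (B S : Finset ℤ) (hBS : B ⊆ S)
    (hB : ∀ n ∈ S, (n ∈ B ↔ |αn n| < k))
    (β : ℤ → ℂ)
    (hβprop : ∀ n ∈ B, β n = ((Real.sqrt (k^2 - (αn n)^2) : ℝ) : ℂ))
    (hβev : ∀ n ∈ S, n ∉ B → β n = Complex.I * ((Real.sqrt ((αn n)^2 - k^2) : ℝ) : ℂ))
    -- the truncated spectral Green's function restricted to x₂ = h, and its x₂-derivative
    (G dG : ℝ → ℝ × ℝ → ℂ)
    (hG : ∀ (x₁ : ℝ) (y : ℝ × ℝ), G x₁ y =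
      (Complex.I / (2 * Λ)) * ∑ n ∈ S, (1 / β n) *
        Complex.exp (Complex.I * (αn n) * (x₁ - y.1) + Complex.I * β n * (h - y.2)))
    (hdG : ∀ (x₁ : ℝ) (y : ℝ × ℝ), dG x₁ y =
      (Complex.I / (2 * Λ)) * ∑ n ∈ S, (1 / β n) * (Complex.I * β n) *
        Complex.exp (Complex.I * (αn n) * (x₁ - y.1) + Complex.I * β n * (h - y.2)))
    (FU : ℝ × ℝ → ℝ × ℝ → ℂ)
    (hFU : ∀ y z : ℝ × ℝ, FU y z =
      (Complex.I / (2 * Λ)) * ∑ n ∈ B, (1 / β n) *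
        Complex.exp (Complex.I * (αn n) * (y.1 - z.1) + Complex.I * β n * (y.2 - z.2))) :
    ∀ y z : ℝ × ℝ, y.2 < h → z.2 < h →
      (∫ x₁ in (-(Λ/2))..(Λ/2),
        ((starRingEnd ℂ) (dG x₁ y) * G x₁ z - dG x₁ z * (starRingEnd ℂ) (G x₁ y)))
        = -FU y z :=
  stmt13_general k Λ α h hΛ αn hαn B S hBS β hβprop hβev G dG hG hdG FU hFU
end
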